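/- arXiv:1704.00360 — 3 statements merged into one kernel-verified Lean document; each statement's English description precedes it below -/
import Mathlib

section
/- Let θ(ρ) = 1 + ε²e^{ψ(ρ)} + ε²e^{ψ(ρ)-ρ} where ψ: ℝ → ℝ is smooth with ψ, ψ', ψ'', ψ''' uniformly bounded by a constant M, and ε > 0. Then there exists a constant C > 0 depending only on M (independent of ε) such that |(log θ)'(ρ)| + |(log θ)''(ρ)| + |(log θ)'''(ρ)| ≤ C for all ρ ∈ ℝ. -/
open Real

namespace Stmt0Aux

noncomputable def th (ψ : ℝ → ℝ) (ε : ℝ) (x : ℝ) : ℝ :=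
  1 + ε^2 * Real.exp (ψ x) + ε^2 * Real.exp (ψ x - x)

noncomputable def D1 (ψ : ℝ → ℝ) (ε : ℝ) (x : ℝ) : ℝ :=
  deriv ψ x * (ε^2 * Real.exp (ψ x)) + (deriv ψ x - 1) * (ε^2 * Real.exp (ψ x - x))

noncomputable def D2 (ψ : ℝ → ℝ) (ε : ℝ) (x : ℝ) : ℝ :=
  (deriv (deriv ψ) x + (deriv ψ x)^2) * (ε^2 * Real.exp (ψ x))
  + (deriv (deriv ψ) x + (deriv ψ x - 1)^2) * (ε^2 * Real.exp (ψ x - x))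

noncomputable def D3 (ψ : ℝ → ℝ) (ε : ℝ) (x : ℝ) : ℝ :=
  (deriv (deriv (deriv ψ)) x + 3 * deriv ψ x * deriv (deriv ψ) x + (deriv ψ x)^3)
      * (ε^2 * Real.exp (ψ x))
  + (deriv (deriv (deriv ψ)) x + 3 * (deriv ψ x - 1) * deriv (deriv ψ) x + (deriv ψ x - 1)^3)
      * (ε^2 * Real.exp (ψ x - x))

variable {ψ : ℝ → ℝ} {ε : ℝ}

lemma th_pos (ψ : ℝ → ℝ) (ε : ℝ) (x : ℝ) : 0 < th ψ ε x := by
  have h1 := Real.exp_pos (ψ x); have h2 := Real.exp_pos (ψ x - x)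
  simp only [th]; nlinarith [sq_nonneg ε]

lemma hasDerivAt_th (hd : Differentiable ℝ ψ) (x : ℝ) :
    HasDerivAt (th ψ ε) (D1 ψ ε x) x := by
  have h1 : HasDerivAt (fun y => ψ y - y) (deriv ψ x - 1) x :=
    (hd x).hasDerivAt.sub (hasDerivAt_id x)
  have hA : HasDerivAt (fun y => ε^2 * Real.exp (ψ y))
      (ε^2 * (Real.exp (ψ x) * deriv ψ x)) x := ((hd x).hasDerivAt.exp).const_mul _
  have hB : HasDerivAt (fun y => ε^2 * Real.exp (ψ y - y))
      (ε^2 * (Real.exp (ψ x - x) * (deriv ψ x - 1))) x := (h1.exp).const_mul _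
  have h2 := (hA.const_add 1).add hB
  have : HasDerivAt (th ψ ε)
      (ε ^ 2 * (Real.exp (ψ x) * deriv ψ x) + ε ^ 2 * (Real.exp (ψ x - x) * (deriv ψ x - 1))) x := h2
  convert this using 1
  simp only [D1]; ring

lemma hasDerivAt_D1 (hd : Differentiable ℝ ψ) (hd1 : Differentiable ℝ (deriv ψ)) (x : ℝ) :
    HasDerivAt (D1 ψ ε) (D2 ψ ε x) x := by
  have h1 : HasDerivAt (fun y => ψ y - y) (deriv ψ x - 1) x :=
    (hd x).hasDerivAt.sub (hasDerivAt_id x)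
  have hA : HasDerivAt (fun y => deriv ψ y * (ε^2 * Real.exp (ψ y)))
      (deriv (deriv ψ) x * (ε^2 * Real.exp (ψ x))
        + deriv ψ x * (ε^2 * (Real.exp (ψ x) * deriv ψ x))) x :=
    (hd1 x).hasDerivAt.mul (((hd x).hasDerivAt.exp).const_mul _)
  have hB : HasDerivAt (fun y => (deriv ψ y - 1) * (ε^2 * Real.exp (ψ y - y)))
      (deriv (deriv ψ) x * (ε^2 * Real.exp (ψ x - x))
        + (deriv ψ x - 1) * (ε^2 * (Real.exp (ψ x - x) * (deriv ψ x - 1)))) x :=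
    ((hd1 x).hasDerivAt.sub_const 1).mul ((h1.exp).const_mul _)
  refine (hA.add hB : HasDerivAt (D1 ψ ε) _ x).congr_deriv ?_
  simp only [D2]; ring

lemma hasDerivAt_D2 (hd : Differentiable ℝ ψ) (hd1 : Differentiable ℝ (deriv ψ))
    (hd2 : Differentiable ℝ (deriv (deriv ψ))) (x : ℝ) :
    HasDerivAt (D2 ψ ε) (D3 ψ ε x) x := by
  have h1 : HasDerivAt (fun y => ψ y - y) (deriv ψ x - 1) x :=
    (hd x).hasDerivAt.sub (hasDerivAt_id x)
  have hc1 : HasDerivAt (fun y => deriv (deriv ψ) y + (deriv ψ y)^2)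
      (deriv (deriv (deriv ψ)) x + (2 : ℕ) * (deriv ψ x)^(2-1) * deriv (deriv ψ) x) x :=
    (hd2 x).hasDerivAt.add ((hd1 x).hasDerivAt.pow 2)
  have hc2 : HasDerivAt (fun y => deriv (deriv ψ) y + (deriv ψ y - 1)^2)
      (deriv (deriv (deriv ψ)) x + (2 : ℕ) * (deriv ψ x - 1)^(2-1) * deriv (deriv ψ) x) x :=
    (hd2 x).hasDerivAt.add (((hd1 x).hasDerivAt.sub_const 1).pow 2)
  have hA := hc1.mul (((hd x).hasDerivAt.exp).const_mul (ε^2))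
  have hB := hc2.mul ((h1.exp).const_mul (ε^2))
  refine (hA.add hB : HasDerivAt (D2 ψ ε) _ x).congr_deriv ?_
  simp only [D3]
  push_cast
  ring

lemma abs_term_le (a b c1 c2 K : ℝ) (ha : 0 ≤ a) (hb : 0 ≤ b)
    (h1 : |c1| ≤ K) (h2 : |c2| ≤ K) : |c1 * a + c2 * b| ≤ K * (1 + a + b) := by
  have hK : 0 ≤ K := le_trans (abs_nonneg _) h1
  calc |c1 * a + c2 * b| ≤ |c1 * a| + |c2 * b| := abs_add_le _ _
    _ = |c1| * a + |c2| * b := by rw [abs_mul, abs_mul, abs_of_nonneg ha, abs_of_nonneg hb]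
    _ ≤ K * a + K * b := by
        exact add_le_add (mul_le_mul_of_nonneg_right h1 ha) (mul_le_mul_of_nonneg_right h2 hb)
    _ ≤ K * (1 + a + b) := by nlinarith

lemma sq_coeff_bound (x y A B : ℝ) (hx : |x| ≤ A) (hy : |y| ≤ B) :
    |y + x^2| ≤ B + A^2 := by
  calc |y + x^2| ≤ |y| + |x^2| := abs_add_le _ _
    _ = |y| + |x|^2 := by rw [abs_pow]
    _ ≤ B + A^2 := add_le_add hy (pow_le_pow_left₀ (abs_nonneg x) hx 2)

lemma cube_coeff_bound (x y z A B C : ℝ) (hx : |x| ≤ A) (hy : |y| ≤ B) (hz : |z| ≤ C) :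
    |z + 3*x*y + x^3| ≤ C + 3*A*B + A^3 := by
  have hA : 0 ≤ A := (abs_nonneg x).trans hx
  have h1 : |3*x*y| ≤ 3*A*B := by
    rw [abs_mul, abs_mul, abs_of_nonneg (by norm_num : (0:ℝ) ≤ 3)]
    have := mul_le_mul hx hy (abs_nonneg y) hA
    nlinarith [abs_nonneg x, abs_nonneg y]
  have h2 : |x^3| ≤ A^3 := by
    rw [abs_pow]; exact pow_le_pow_left₀ (abs_nonneg x) hx 3
  calc |z + 3*x*y + x^3| ≤ |z + 3*x*y| + |x^3| := abs_add_le _ _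
    _ ≤ |z| + |3*x*y| + |x^3| := by linarith [abs_add_le z (3*x*y)]
    _ ≤ C + 3*A*B + A^3 := by linarith

end Stmt0Aux

open Real Stmt0Aux in
/-- uniform bound on first three derivatives of log θ where
θ(ρ) = 1 + ε²e^{ψ(ρ)} + ε²e^{ψ(ρ)-ρ}, with constant depending only on the
bound M for ψ and its first three derivatives, independent of ε. -/
theorem stmt0 (M : ℝ) (hM : 0 < M) :
    ∃ C > 0, ∀ ψ : ℝ → ℝ, ContDiff ℝ (⊤ : ℕ∞) ψ →
      (∀ ρ : ℝ, |ψ ρ| ≤ M ∧ |iteratedDeriv 1 ψ ρ| ≤ M ∧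
        |iteratedDeriv 2 ψ ρ| ≤ M ∧ |iteratedDeriv 3 ψ ρ| ≤ M) →
      ∀ ε : ℝ, 0 < ε → ∀ ρ : ℝ,
        |iteratedDeriv 1
            (fun ρ => Real.log (1 + ε^2 * Real.exp (ψ ρ) + ε^2 * Real.exp (ψ ρ - ρ))) ρ|
        + |iteratedDeriv 2
            (fun ρ => Real.log (1 + ε^2 * Real.exp (ψ ρ) + ε^2 * Real.exp (ψ ρ - ρ))) ρ|
        + |iteratedDeriv 3
            (fun ρ => Real.log (1 + ε^2 * Real.exp (ψ ρ) + ε^2 * Real.exp (ψ ρ - ρ))) ρ|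
        ≤ C := by
  set K1 : ℝ := M + 1 with hK1def
  set K2 : ℝ := M + (M+1)^2 with hK2def
  set K3 : ℝ := M + 3*(M+1)*M + (M+1)^3 with hK3def
  refine ⟨K1 + (K2 + K1^2) + (K3 + 3*K1*K2 + 2*K1^3), by
    rw [hK1def, hK2def, hK3def]; nlinarith [hM, sq_nonneg M, pow_pos hM 3, pow_pos hM 2], ?_⟩
  intro ψ hψ hb ε hε ρ
  -- differentiability of ψ and its derivatives
  have h1 : ContDiff ℝ (⊤:ℕ∞) ψ := hψ.of_le (by simp)
  have h2 := (contDiff_infty_iff_deriv.mp h1).2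
  have h3 := (contDiff_infty_iff_deriv.mp h2).2
  have hd : Differentiable ℝ ψ := h1.differentiable (by simp)
  have hd1 : Differentiable ℝ (deriv ψ) := h2.differentiable (by simp)
  have hd2 : Differentiable ℝ (deriv (deriv ψ)) := h3.differentiable (by simp)
  -- rewrite the function as log ∘ th
  have hfun : (fun ρ => Real.log (1 + ε^2 * Real.exp (ψ ρ) + ε^2 * Real.exp (ψ ρ - ρ)))
      = (fun y => Real.log (th ψ ε y)) := rfl
  rw [hfun]
  have hθpos : ∀ x, 0 < th ψ ε x := th_pos ψ ε
  have hθne : ∀ x, th ψ ε x ≠ 0 := fun x => (hθpos x).ne'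
  have hθ : ∀ x, HasDerivAt (th ψ ε) (D1 ψ ε x) x := fun x => hasDerivAt_th hd x
  have hD1 : ∀ x, HasDerivAt (D1 ψ ε) (D2 ψ ε x) x := fun x => hasDerivAt_D1 hd hd1 x
  have hD2 : ∀ x, HasDerivAt (D2 ψ ε) (D3 ψ ε x) x := fun x => hasDerivAt_D2 hd hd1 hd2 x
  set g1 : ℝ → ℝ := fun x => D1 ψ ε x / th ψ ε x with hg1def
  set g2 : ℝ → ℝ := fun x =>
    (D2 ψ ε x * th ψ ε x - D1 ψ ε x * D1 ψ ε x) / th ψ ε x ^ 2 with hg2def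
  have hg : ∀ x, HasDerivAt (fun y => Real.log (th ψ ε y)) (g1 x) x :=
    fun x => (hθ x).log (hθne x)
  have hderiv1 : deriv (fun y => Real.log (th ψ ε y)) = g1 := funext fun x => (hg x).deriv
  have hgd1 : ∀ x, HasDerivAt g1 (g2 x) x := fun x => (hD1 x).div (hθ x) (hθne x)
  have hderiv2 : deriv g1 = g2 := funext fun x => (hgd1 x).deriv
  -- derivative of g2 at ρ
  have hN : HasDerivAt (fun x => D2 ψ ε x * th ψ ε x - D1 ψ ε x * D1 ψ ε x)
      (D3 ψ ε ρ * th ψ ε ρ + D2 ψ ε ρ * D1 ψ ε ρ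
        - (D2 ψ ε ρ * D1 ψ ε ρ + D1 ψ ε ρ * D2 ψ ε ρ)) ρ :=
    ((hD2 ρ).mul (hθ ρ)).sub ((hD1 ρ).mul (hD1 ρ))
  have hDen : HasDerivAt (fun x => th ψ ε x ^ 2)
      ((2:ℕ) * th ψ ε ρ ^ (2-1) * D1 ψ ε ρ) ρ := (hθ ρ).pow 2
  have hDenne : th ψ ε ρ ^ 2 ≠ 0 := pow_ne_zero 2 (hθne ρ)
  have hgd2 : HasDerivAt g2
      (((D3 ψ ε ρ * th ψ ε ρ + D2 ψ ε ρ * D1 ψ ε ρ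
          - (D2 ψ ε ρ * D1 ψ ε ρ + D1 ψ ε ρ * D2 ψ ε ρ)) * th ψ ε ρ ^ 2
        - (D2 ψ ε ρ * th ψ ε ρ - D1 ψ ε ρ * D1 ψ ε ρ)
            * ((2:ℕ) * th ψ ε ρ ^ (2-1) * D1 ψ ε ρ)) / (th ψ ε ρ ^ 2) ^ 2) ρ :=
    hN.div hDen hDenne
  -- values of iterated derivatives at ρ
  set r1 : ℝ := D1 ψ ε ρ / th ψ ε ρ with hr1def
  set r2 : ℝ := D2 ψ ε ρ / th ψ ε ρ with hr2def
  set r3 : ℝ := D3 ψ ε ρ / th ψ ε ρ with hr3def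
  have i1 : iteratedDeriv 1 (fun y => Real.log (th ψ ε y)) ρ = r1 := by
    rw [iteratedDeriv_one, hderiv1]
  have i2 : iteratedDeriv 2 (fun y => Real.log (th ψ ε y)) ρ = r2 - r1^2 := by
    rw [show (2:ℕ) = 1+1 from rfl, iteratedDeriv_succ, iteratedDeriv_one, hderiv1, hderiv2,
      hg2def, hr1def, hr2def]
    field_simp [hθne ρ]
    have := hθne ρ
    rw [div_pow]
    field_simp
    ring
  have i3 : iteratedDeriv 3 (fun y => Real.log (th ψ ε y)) ρ
      = r3 - 3*r1*r2 + 2*r1^3 := by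
    rw [show (3:ℕ) = 1+1+1 from rfl, iteratedDeriv_succ, iteratedDeriv_succ, iteratedDeriv_one,
      hderiv1, hderiv2, hgd2.deriv, hr1def, hr2def, hr3def]
    push_cast
    field_simp [hθne ρ]
    ring
  rw [i1, i2, i3]
  -- pointwise bounds on ψ derivatives at ρ
  obtain ⟨b0, b1, b2, b3⟩ := hb ρ
  rw [iteratedDeriv_one] at b1
  rw [show (2:ℕ) = 1+1 from rfl, iteratedDeriv_succ, iteratedDeriv_one] at b2
  rw [show (3:ℕ) = 1+1+1 from rfl, iteratedDeriv_succ, iteratedDeriv_succ,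
    iteratedDeriv_one] at b3
  have hc1 : |deriv ψ ρ| ≤ K1 := by rw [hK1def]; linarith
  have hc1' : |deriv ψ ρ - 1| ≤ K1 := by
    obtain ⟨l, r⟩ := abs_le.mp b1
    rw [hK1def, abs_le]; constructor <;> linarith
  have ha : 0 ≤ ε^2 * Real.exp (ψ ρ) := by positivity
  have hb' : 0 ≤ ε^2 * Real.exp (ψ ρ - ρ) := by positivity
  -- coefficient bounds
  have hc2a : |deriv (deriv ψ) ρ + (deriv ψ ρ)^2| ≤ K2 := by
    have := sq_coeff_bound (deriv ψ ρ) (deriv (deriv ψ) ρ) K1 M hc1 b2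
    rw [hK2def]; rw [hK1def] at this; linarith
  have hc2b : |deriv (deriv ψ) ρ + (deriv ψ ρ - 1)^2| ≤ K2 := by
    have := sq_coeff_bound (deriv ψ ρ - 1) (deriv (deriv ψ) ρ) K1 M hc1' b2
    rw [hK2def]; rw [hK1def] at this; linarith
  have hc3a : |deriv (deriv (deriv ψ)) ρ + 3 * deriv ψ ρ * deriv (deriv ψ) ρ
      + (deriv ψ ρ)^3| ≤ K3 := by
    have := cube_coeff_bound (deriv ψ ρ) (deriv (deriv ψ) ρ) (deriv (deriv (deriv ψ)) ρ)
      K1 M M hc1 b2 b3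
    rw [hK3def]; rw [hK1def] at this; linarith
  have hc3b : |deriv (deriv (deriv ψ)) ρ + 3 * (deriv ψ ρ - 1) * deriv (deriv ψ) ρ
      + (deriv ψ ρ - 1)^3| ≤ K3 := by
    have := cube_coeff_bound (deriv ψ ρ - 1) (deriv (deriv ψ) ρ) (deriv (deriv (deriv ψ)) ρ)
      K1 M M hc1' b2 b3
    rw [hK3def]; rw [hK1def] at this; linarith
  -- bounds |r_i| ≤ K_i
  have hrb : ∀ (D : ℝ) (K : ℝ), |D| ≤ K * th ψ ε ρ → |D / th ψ ε ρ| ≤ K := by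
    intro D K h
    rw [abs_div, abs_of_pos (hθpos ρ), div_le_iff₀ (hθpos ρ)]
    exact h
  have hr1 : |r1| ≤ K1 := by
    refine hrb _ _ ?_
    have := abs_term_le (ε^2 * Real.exp (ψ ρ)) (ε^2 * Real.exp (ψ ρ - ρ))
      (deriv ψ ρ) (deriv ψ ρ - 1) K1 ha hb' hc1 hc1'
    simpa [D1, th, mul_add, add_assoc] using this
  have hr2 : |r2| ≤ K2 := by
    refine hrb _ _ ?_
    have := abs_term_le (ε^2 * Real.exp (ψ ρ)) (ε^2 * Real.exp (ψ ρ - ρ))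
      (deriv (deriv ψ) ρ + (deriv ψ ρ)^2) (deriv (deriv ψ) ρ + (deriv ψ ρ - 1)^2)
      K2 ha hb' hc2a hc2b
    simpa [D2, th, mul_add, add_assoc] using this
  have hr3 : |r3| ≤ K3 := by
    refine hrb _ _ ?_
    have := abs_term_le (ε^2 * Real.exp (ψ ρ)) (ε^2 * Real.exp (ψ ρ - ρ))
      (deriv (deriv (deriv ψ)) ρ + 3 * deriv ψ ρ * deriv (deriv ψ) ρ + (deriv ψ ρ)^3)
      (deriv (deriv (deriv ψ)) ρ + 3 * (deriv ψ ρ - 1) * deriv (deriv ψ) ρ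
        + (deriv ψ ρ - 1)^3)
      K3 ha hb' hc3a hc3b
    simpa [D3, th, mul_add, add_assoc] using this
  -- conclude
  have hK1n : 0 ≤ K1 := (abs_nonneg r1).trans hr1
  have hK2n : 0 ≤ K2 := (abs_nonneg r2).trans hr2
  have e2 : |r2 - r1^2| ≤ K2 + K1^2 := by
    calc |r2 - r1^2| ≤ |r2| + |r1^2| := abs_sub _ _
      _ = |r2| + |r1|^2 := by rw [abs_pow]
      _ ≤ K2 + K1^2 := add_le_add hr2 (pow_le_pow_left₀ (abs_nonneg r1) hr1 2)
  have e3 : |r3 - 3*r1*r2 + 2*r1^3| ≤ K3 + 3*K1*K2 + 2*K1^3 := by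
    have h32 : |3*r1*r2| ≤ 3*K1*K2 := by
      rw [abs_mul, abs_mul, abs_of_nonneg (by norm_num : (0:ℝ) ≤ 3)]
      rw [mul_assoc]
      have t1 : |r1| * |r2| ≤ K1*K2 := mul_le_mul hr1 hr2 (abs_nonneg r2) hK1n
      linarith
    have h33 : |2*r1^3| ≤ 2*K1^3 := by
      rw [abs_mul, abs_pow, abs_of_nonneg (by norm_num : (0:ℝ) ≤ 2)]
      have := pow_le_pow_left₀ (abs_nonneg r1) hr1 3
      linarith
    calc |r3 - 3*r1*r2 + 2*r1^3| ≤ |r3 - 3*r1*r2| + |2*r1^3| := abs_add_le _ _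
      _ ≤ |r3| + |3*r1*r2| + |2*r1^3| := by linarith [abs_sub r3 (3*r1*r2)]
      _ ≤ K3 + 3*K1*K2 + 2*K1^3 := by linarith
  linarith
end

section
/- Let v: ℝ → ℝ satisfy v' > 0, v'' > 0, and suppose there exist smooth functions v₀, v_∞: [0,∞) → ℝ with v₀'(0) > 0, v_∞'(0) > 0, and constants 0 < a < b such that v(ρ) = v₀(e^ρ) + aρ = v_∞(e^{−ρ}) + bρ. Then the quantity H(ρ) = v''(ρ) / ((v'(ρ) − a)(b − v'(ρ))) satisfies: a < v'(ρ) < b for all ρ, and H is bounded above as ρ → ±∞; specifically limsup_{ρ→−∞} H ≤ 1/(b−a) + 1. -/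
open Real Filter
open scoped ContDiff

/-- boundary behavior of H = v'' / ((v' − a)(b − v')) for a potential with
v(ρ) = v₀(e^ρ) + aρ = v_∞(e^{−ρ}) + bρ, v₀'(0) > 0, v_∞'(0) > 0: a < v' < b, H is
bounded above as ρ → ±∞, and limsup_{ρ→−∞} H ≤ 1/(b−a) + 1. -/
theorem stmt16 (v v0 vinf : ℝ → ℝ) (a b : ℝ) (ha : 0 < a) (hab : a < b)
    (hv : ContDiff ℝ (⊤ : ℕ∞) v) (hv0 : ContDiff ℝ (⊤ : ℕ∞) v0) (hvinf : ContDiff ℝ (⊤ : ℕ∞) vinf)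
    (hv' : ∀ ρ : ℝ, 0 < deriv v ρ) (hv'' : ∀ ρ : ℝ, 0 < deriv (deriv v) ρ)
    (h0 : 0 < deriv v0 0) (hinf : 0 < deriv vinf 0)
    (hrep0 : ∀ ρ : ℝ, v ρ = v0 (Real.exp ρ) + a * ρ)
    (hrepinf : ∀ ρ : ℝ, v ρ = vinf (Real.exp (-ρ)) + b * ρ) :
    (∀ ρ : ℝ, a < deriv v ρ ∧ deriv v ρ < b) ∧
    (∃ C : ℝ, ∀ᶠ ρ in Filter.atTop,
      deriv (deriv v) ρ / ((deriv v ρ - a) * (b - deriv v ρ)) ≤ C) ∧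
    Filter.limsup
        (fun ρ => deriv (deriv v) ρ / ((deriv v ρ - a) * (b - deriv v ρ)))
        Filter.atBot ≤ 1 / (b - a) + 1 := by
  have hv0i : ContDiff ℝ (∞ : WithTop ℕ∞) v0 := hv0.of_le (by simp)
  have hvinfi : ContDiff ℝ (∞ : WithTop ℕ∞) vinf := hvinf.of_le (by simp)
  have hv0d : Differentiable ℝ v0 := hv0i.differentiable (by norm_num)
  have hvinfd : Differentiable ℝ vinf := hvinfi.differentiable (by norm_num)
  have hg : ContDiff ℝ (∞ : WithTop ℕ∞) (deriv v0) := (contDiff_infty_iff_deriv.mp hv0i).2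
  have hh : ContDiff ℝ (∞ : WithTop ℕ∞) (deriv vinf) := (contDiff_infty_iff_deriv.mp hvinfi).2
  have hgd : Differentiable ℝ (deriv v0) := hg.differentiable (by norm_num)
  have hhd : Differentiable ℝ (deriv vinf) := hh.differentiable (by norm_num)
  have hgc : Continuous (deriv v0) := hgd.continuous
  have hhc : Continuous (deriv vinf) := hhd.continuous
  have hg'c : Continuous (deriv (deriv v0)) := ((contDiff_infty_iff_deriv.mp hg).2).continuous
  have hh'c : Continuous (deriv (deriv vinf)) := ((contDiff_infty_iff_deriv.mp hh).2).continuous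
  -- first derivative formulas
  have hA : ∀ ρ : ℝ, deriv v ρ = Real.exp ρ * deriv v0 (Real.exp ρ) + a := by
    intro ρ
    have hd : HasDerivAt v (deriv v0 (Real.exp ρ) * Real.exp ρ + a * 1) ρ := by
      have h1 : HasDerivAt (fun x : ℝ => v0 (Real.exp x))
          (deriv v0 (Real.exp ρ) * Real.exp ρ) ρ :=
        (hv0d (Real.exp ρ)).hasDerivAt.comp ρ (Real.hasDerivAt_exp ρ)
      have h2 : HasDerivAt (fun x : ℝ => a * x) (a * 1) ρ := (hasDerivAt_id ρ).const_mul a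
      have hveq : v = fun x : ℝ => v0 (Real.exp x) + a * x := funext hrep0
      rw [hveq]; exact h1.add h2
    rw [hd.deriv]; ring
  have hA' : ∀ ρ : ℝ, deriv v ρ = b - Real.exp (-ρ) * deriv vinf (Real.exp (-ρ)) := by
    intro ρ
    have hexp : HasDerivAt (fun x : ℝ => Real.exp (-x)) (Real.exp (-ρ) * (-1)) ρ :=
      (Real.hasDerivAt_exp (-ρ)).comp ρ ((hasDerivAt_id ρ).neg)
    have hd : HasDerivAt v
        (deriv vinf (Real.exp (-ρ)) * (Real.exp (-ρ) * (-1)) + b * 1) ρ := by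
      have h1 : HasDerivAt (fun x : ℝ => vinf (Real.exp (-x)))
          (deriv vinf (Real.exp (-ρ)) * (Real.exp (-ρ) * (-1))) ρ :=
        (hvinfd (Real.exp (-ρ))).hasDerivAt.comp ρ hexp
      have h2 : HasDerivAt (fun x : ℝ => b * x) (b * 1) ρ := (hasDerivAt_id ρ).const_mul b
      have hveq : v = fun x : ℝ => vinf (Real.exp (-x)) + b * x := funext hrepinf
      rw [hveq]; exact h1.add h2
    rw [hd.deriv]; ring
  -- second derivative formulas
  have hB : ∀ ρ : ℝ, deriv (deriv v) ρ =
      Real.exp ρ * deriv v0 (Real.exp ρ)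
        + Real.exp ρ * Real.exp ρ * deriv (deriv v0) (Real.exp ρ) := by
    intro ρ
    have hfe : deriv v = fun x : ℝ => Real.exp x * deriv v0 (Real.exp x) + a := funext hA
    have h1 : HasDerivAt (fun x : ℝ => deriv v0 (Real.exp x))
        (deriv (deriv v0) (Real.exp ρ) * Real.exp ρ) ρ :=
      (hgd (Real.exp ρ)).hasDerivAt.comp ρ (Real.hasDerivAt_exp ρ)
    have hd : HasDerivAt (fun x : ℝ => Real.exp x * deriv v0 (Real.exp x) + a)
        (Real.exp ρ * deriv v0 (Real.exp ρ)
          + Real.exp ρ * (deriv (deriv v0) (Real.exp ρ) * Real.exp ρ)) ρ :=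
      ((Real.hasDerivAt_exp ρ).mul h1).add_const a
    rw [hfe, hd.deriv]; ring
  have hB' : ∀ ρ : ℝ, deriv (deriv v) ρ =
      Real.exp (-ρ) * deriv vinf (Real.exp (-ρ))
        + Real.exp (-ρ) * Real.exp (-ρ) * deriv (deriv vinf) (Real.exp (-ρ)) := by
    intro ρ
    have hfe : deriv v = fun x : ℝ => b - Real.exp (-x) * deriv vinf (Real.exp (-x)) :=
      funext hA'
    have hexp : HasDerivAt (fun x : ℝ => Real.exp (-x)) (Real.exp (-ρ) * (-1)) ρ :=
      (Real.hasDerivAt_exp (-ρ)).comp ρ ((hasDerivAt_id ρ).neg)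
    have h1 : HasDerivAt (fun x : ℝ => deriv vinf (Real.exp (-x)))
        (deriv (deriv vinf) (Real.exp (-ρ)) * (Real.exp (-ρ) * (-1))) ρ := by
      have := (hhd (Real.exp (-ρ))).hasDerivAt.comp ρ hexp; exact this
    have hd : HasDerivAt (fun x : ℝ => b - Real.exp (-x) * deriv vinf (Real.exp (-x)))
        (-(Real.exp (-ρ) * (-1) * deriv vinf (Real.exp (-ρ))
          + Real.exp (-ρ) * (deriv (deriv vinf) (Real.exp (-ρ)) * (Real.exp (-ρ) * (-1))))) ρ :=
      (hexp.mul h1).const_sub b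
    rw [hfe, hd.deriv]; ring
  -- limits of deriv v
  have hEbot : Filter.Tendsto (fun ρ : ℝ => Real.exp ρ) Filter.atBot (nhds 0) :=
    Real.tendsto_exp_atBot
  have hEtop : Filter.Tendsto (fun ρ : ℝ => Real.exp (-ρ)) Filter.atTop (nhds 0) :=
    Real.tendsto_exp_atBot.comp tendsto_neg_atTop_atBot
  have hvbot : Filter.Tendsto (deriv v) Filter.atBot (nhds a) := by
    have h1 : Filter.Tendsto (fun ρ : ℝ => Real.exp ρ * deriv v0 (Real.exp ρ) + a)
        Filter.atBot (nhds (0 * deriv v0 0 + a)) :=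
      (hEbot.mul ((hgc.tendsto 0).comp hEbot)).add tendsto_const_nhds
    rw [show (0 : ℝ) * deriv v0 0 + a = a by ring] at h1
    exact h1.congr fun ρ => (hA ρ).symm
  have hvtop : Filter.Tendsto (deriv v) Filter.atTop (nhds b) := by
    have h1 : Filter.Tendsto (fun ρ : ℝ => b - Real.exp (-ρ) * deriv vinf (Real.exp (-ρ)))
        Filter.atTop (nhds (b - 0 * deriv vinf 0)) :=
      tendsto_const_nhds.sub (hEtop.mul ((hhc.tendsto 0).comp hEtop))
    rw [show b - (0 : ℝ) * deriv vinf 0 = b by ring] at h1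
    exact h1.congr fun ρ => (hA' ρ).symm
  have hmono : StrictMono (deriv v) := strictMono_of_deriv_pos hv''
  have hlt : ∀ ρ : ℝ, a < deriv v ρ := by
    intro ρ
    have h1 : a ≤ deriv v (ρ - 1) :=
      le_of_tendsto hvbot (Filter.eventually_atBot.mpr
        ⟨ρ - 1, fun x hx => hmono.monotone hx⟩)
    have h2 : deriv v (ρ - 1) < deriv v ρ := hmono (by linarith)
    linarith
  have hub : ∀ ρ : ℝ, deriv v ρ < b := by
    intro ρ
    have h1 : deriv v (ρ + 1) ≤ b :=
      ge_of_tendsto hvtop (Filter.eventually_atTop.mpr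
        ⟨ρ + 1, fun x hx => hmono.monotone hx⟩)
    have h2 : deriv v ρ < deriv v (ρ + 1) := hmono (by linarith)
    linarith
  have hgpos : ∀ ρ : ℝ, 0 < deriv v0 (Real.exp ρ) := by
    intro ρ
    have h1 := hlt ρ
    rw [hA ρ] at h1
    nlinarith [Real.exp_pos ρ]
  have hhpos : ∀ ρ : ℝ, 0 < deriv vinf (Real.exp (-ρ)) := by
    intro ρ
    have h1 := hub ρ
    rw [hA' ρ] at h1
    nlinarith [Real.exp_pos (-ρ)]
  -- rewritten form of H near -∞
  have hHbot : ∀ ρ : ℝ, deriv (deriv v) ρ / ((deriv v ρ - a) * (b - deriv v ρ)) =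
      1 / (b - deriv v ρ)
        + (Real.exp ρ * deriv (deriv v0) (Real.exp ρ))
          / (deriv v0 (Real.exp ρ) * (b - deriv v ρ)) := by
    intro ρ
    have hE := Real.exp_pos ρ
    have hG := hgpos ρ
    have hBne : b - deriv v ρ ≠ 0 := (sub_pos.mpr (hub ρ)).ne'
    rw [hB ρ, show deriv v ρ - a = Real.exp ρ * deriv v0 (Real.exp ρ) by rw [hA ρ]; ring]
    field_simp
  -- rewritten form of H near +∞
  have hHtop : ∀ ρ : ℝ, deriv (deriv v) ρ / ((deriv v ρ - a) * (b - deriv v ρ)) =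
      1 / (deriv v ρ - a)
        + (Real.exp (-ρ) * deriv (deriv vinf) (Real.exp (-ρ)))
          / (deriv vinf (Real.exp (-ρ)) * (deriv v ρ - a)) := by
    intro ρ
    have hE := Real.exp_pos (-ρ)
    have hG := hhpos ρ
    have hAne : deriv v ρ - a ≠ 0 := (sub_pos.mpr (hlt ρ)).ne'
    rw [hB' ρ, show b - deriv v ρ = Real.exp (-ρ) * deriv vinf (Real.exp (-ρ)) by
      rw [hA' ρ]; ring]
    field_simp
  have hba : (0:ℝ) < b - a := sub_pos.mpr hab
  -- tendsto of H at -∞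
  have hTbot : Filter.Tendsto
      (fun ρ => deriv (deriv v) ρ / ((deriv v ρ - a) * (b - deriv v ρ)))
      Filter.atBot (nhds (1 / (b - a))) := by
    have h1 : Filter.Tendsto (fun ρ : ℝ => b - deriv v ρ) Filter.atBot (nhds (b - a)) :=
      tendsto_const_nhds.sub hvbot
    have hfirst : Filter.Tendsto (fun ρ : ℝ => 1 / (b - deriv v ρ)) Filter.atBot
        (nhds (1 / (b - a))) := by
      simp only [one_div]
      exact h1.inv₀ hba.ne'
    have hnum : Filter.Tendsto (fun ρ : ℝ => Real.exp ρ * deriv (deriv v0) (Real.exp ρ))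
        Filter.atBot (nhds 0) := by
      have := hEbot.mul ((hg'c.tendsto 0).comp hEbot)
      simpa using this
    have hden : Filter.Tendsto
        (fun ρ : ℝ => deriv v0 (Real.exp ρ) * (b - deriv v ρ)) Filter.atBot
        (nhds (deriv v0 0 * (b - a))) :=
      ((hgc.tendsto 0).comp hEbot).mul h1
    have hsecond : Filter.Tendsto
        (fun ρ : ℝ => (Real.exp ρ * deriv (deriv v0) (Real.exp ρ))
          / (deriv v0 (Real.exp ρ) * (b - deriv v ρ))) Filter.atBot (nhds 0) := by
      have := hnum.div hden (mul_pos h0 hba).ne'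
      rw [zero_div] at this; exact this
    have := hfirst.add hsecond
    rw [add_zero] at this
    exact this.congr fun ρ => (hHbot ρ).symm
  -- tendsto of H at +∞
  have hTtop : Filter.Tendsto
      (fun ρ => deriv (deriv v) ρ / ((deriv v ρ - a) * (b - deriv v ρ)))
      Filter.atTop (nhds (1 / (b - a))) := by
    have h1 : Filter.Tendsto (fun ρ : ℝ => deriv v ρ - a) Filter.atTop (nhds (b - a)) :=
      hvtop.sub tendsto_const_nhds
    have hfirst : Filter.Tendsto (fun ρ : ℝ => 1 / (deriv v ρ - a)) Filter.atTop
        (nhds (1 / (b - a))) := by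
      simp only [one_div]
      exact h1.inv₀ hba.ne'
    have hnum : Filter.Tendsto
        (fun ρ : ℝ => Real.exp (-ρ) * deriv (deriv vinf) (Real.exp (-ρ)))
        Filter.atTop (nhds 0) := by
      have := hEtop.mul ((hh'c.tendsto 0).comp hEtop)
      simpa using this
    have hden : Filter.Tendsto
        (fun ρ : ℝ => deriv vinf (Real.exp (-ρ)) * (deriv v ρ - a)) Filter.atTop
        (nhds (deriv vinf 0 * (b - a))) :=
      ((hhc.tendsto 0).comp hEtop).mul h1
    have hsecond : Filter.Tendsto
        (fun ρ : ℝ => (Real.exp (-ρ) * deriv (deriv vinf) (Real.exp (-ρ)))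
          / (deriv vinf (Real.exp (-ρ)) * (deriv v ρ - a))) Filter.atTop (nhds 0) := by
      have := hnum.div hden (mul_pos hinf hba).ne'
      rw [zero_div] at this; exact this
    have := hfirst.add hsecond
    rw [add_zero] at this
    exact this.congr fun ρ => (hHtop ρ).symm
  refine ⟨fun ρ => ⟨hlt ρ, hub ρ⟩, ⟨1 / (b - a) + 1, ?_⟩, ?_⟩
  · exact hTtop.eventually (eventually_le_nhds (by linarith))
  · rw [hTbot.limsup_eq]
    linarith
end

section
/- Let 0 < a_T, α, k, T be constants and suppose a metric space family d_t on a set X satisfies: there are maps p: X → ℙ¹ and s: ℙ¹ → X with p∘s = id, (ka_T)^{1/2} d_fs(y₀,y₁) ≤ d_t(s(y₀),s(y₁)) ≤ (ka_T + k(1+α)(T−t))^{1/2} d_fs(y₀,y₁) for all y₀,y₁, and sup_{y} diam(p^{−1}(y), d_t) → 0 as t → T⁻. Then for every x₀, x₁ ∈ X, |d_t(x₀,x₁) − (ka_T)^{1/2} d_fs(p(x₀),p(x₁))| → 0 uniformly as t → T⁻; in particular (X, d_t) converges in Gromov-Hausdorff topology to (ℙ¹, ka_T · ω_fs). -/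
/-!
Moving x₀, x₁ to s(p x₀), s(p x₁) changes d_t by at most twice the fibre diameter. On the image
of s, d_t is pinched between √(ka_T)·d_Y and √(ka_T + k(1+α)(T−t))·d_Y, whose constants converge
to each other as t → T⁻, and d_Y is bounded because Y is compact.
-/

open Filter Topology Metric Set

theorem exists_Ico_forall_iff_eventually_nhdsLT {P : ℝ → Prop} {T : ℝ} :
    (∃ t₀ < T, ∀ t, t₀ ≤ t → t < T → P t) ↔ ∀ᶠ t in 𝓝[<] T, P t := by
  rw [Filter.Eventually, mem_nhdsLT_iff_exists_Ico_subset]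
  exact exists_congr fun t₀ => and_congr_right fun _ =>
    ⟨fun h t ht => h t ht.1 ht.2, fun h t h₀ h₁ => h ⟨h₀, h₁⟩⟩

section

variable {X Y : Type*} {d : X → X → ℝ}

theorem abs_sub_le_add_of_triangle (hsymm : ∀ x y, d x y = d y x)
    (htri : ∀ x y z, d x z ≤ d x y + d y z) (x₀ x₁ x₀' x₁' : X) :
    |d x₀ x₁ - d x₀' x₁'| ≤ d x₀ x₀' + d x₁ x₁' := by
  rw [abs_sub_le_iff]
  constructor
  · linarith [htri x₀ x₀' x₁, htri x₀' x₁' x₁, hsymm x₁ x₁']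
  · linarith [htri x₀' x₀ x₁', htri x₀ x₁ x₁', hsymm x₀ x₀']

theorem abs_sub_mul_dist_le_of_section [PseudoMetricSpace Y]
    (hsymm : ∀ x y, d x y = d y x) (htri : ∀ x y z, d x z ≤ d x y + d y z)
    {p : X → Y} {s : Y → X} (hps : ∀ y, p (s y) = y) {c c' δ : ℝ}
    (hfib : ∀ x₀ x₁, p x₀ = p x₁ → d x₀ x₁ ≤ δ)
    (hlo : ∀ y₀ y₁, c * dist y₀ y₁ ≤ d (s y₀) (s y₁))
    (hhi : ∀ y₀ y₁, d (s y₀) (s y₁) ≤ c' * dist y₀ y₁) (x₀ x₁ : X) :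
    |d x₀ x₁ - c * dist (p x₀) (p x₁)| ≤ 2 * δ + (c' - c) * dist (p x₀) (p x₁) := by
  have hfib₀ := hfib x₀ (s (p x₀)) (hps _).symm
  have hfib₁ := hfib x₁ (s (p x₁)) (hps _).symm
  have hsec : |d (s (p x₀)) (s (p x₁)) - c * dist (p x₀) (p x₁)|
      ≤ (c' - c) * dist (p x₀) (p x₁) := by
    rw [abs_sub_le_iff]
    constructor <;> linarith [hlo (p x₀) (p x₁), hhi (p x₀) (p x₁)]
  calc |d x₀ x₁ - c * dist (p x₀) (p x₁)|
      ≤ |d x₀ x₁ - d (s (p x₀)) (s (p x₁))|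
        + |d (s (p x₀)) (s (p x₁)) - c * dist (p x₀) (p x₁)| := abs_sub_le _ _ _
    _ ≤ 2 * δ + (c' - c) * dist (p x₀) (p x₁) := by
      linarith [abs_sub_le_add_of_triangle hsymm htri x₀ x₁ (s (p x₀)) (s (p x₁))]

end

theorem stmt18_general {X Y : Type*} [MetricSpace Y] [CompactSpace Y]
    (k aT α T : ℝ)
    (d : ℝ → X → X → ℝ)
    (hsymm : ∀ t (x₀ x₁ : X), d t x₀ x₁ = d t x₁ x₀)
    (htri : ∀ t (x₀ x₁ x₂ : X), d t x₀ x₂ ≤ d t x₀ x₁ + d t x₁ x₂)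
    (p : X → Y) (s : Y → X) (hps : ∀ y : Y, p (s y) = y)
    (hcomp : ∀ t : ℝ, t < T → ∀ y₀ y₁ : Y,
      Real.sqrt (k * aT) * dist y₀ y₁ ≤ d t (s y₀) (s y₁) ∧
      d t (s y₀) (s y₁) ≤ Real.sqrt (k * aT + k * (1 + α) * (T - t)) * dist y₀ y₁)
    (hfib : ∀ ε > (0:ℝ), ∃ t₀ < T, ∀ t : ℝ, t₀ ≤ t → t < T →
      ∀ x₀ x₁ : X, p x₀ = p x₁ → d t x₀ x₁ ≤ ε) :
    ∀ ε > (0:ℝ), ∃ t₀ < T, ∀ t : ℝ, t₀ ≤ t → t < T → ∀ x₀ x₁ : X,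
      |d t x₀ x₁ - Real.sqrt (k * aT) * dist (p x₀) (p x₁)| ≤ ε := by
  intro ε hε
  set c' : ℝ → ℝ := fun t => Real.sqrt (k * aT + k * (1 + α) * (T - t))
  have hc' : Tendsto c' (𝓝[<] T) (𝓝 (Real.sqrt (k * aT))) := by
    have : Continuous c' := by fun_prop
    simpa [c'] using (this.tendsto T).mono_left nhdsWithin_le_nhds
  have hgap : ∀ᶠ t in 𝓝[<] T, |c' t - Real.sqrt (k * aT)| * diam (univ : Set Y) < ε / 3 := by
    refine Tendsto.eventually_lt_const (by positivity) ?_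
    simpa using ((hc'.sub_const (Real.sqrt (k * aT))).abs).mul_const (diam (univ : Set Y))
  rw [exists_Ico_forall_iff_eventually_nhdsLT]
  filter_upwards [exists_Ico_forall_iff_eventually_nhdsLT.1 (hfib (ε / 3) (by positivity)),
    hgap, self_mem_nhdsWithin] with t hfib_t hgap_t (htT : t < T) x₀ x₁
  have hY : dist (p x₀) (p x₁) ≤ diam (univ : Set Y) :=
    dist_le_diam_of_mem isBounded_of_compactSpace (mem_univ _) (mem_univ _)
  have hmul : (c' t - Real.sqrt (k * aT)) * dist (p x₀) (p x₁) ≤ ε / 3 :=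
    calc _ ≤ |c' t - Real.sqrt (k * aT)| * diam (univ : Set Y) :=
          mul_le_mul (le_abs_self _) hY dist_nonneg (abs_nonneg _)
      _ ≤ ε / 3 := hgap_t.le
  have := abs_sub_mul_dist_le_of_section (hsymm t) (htri t) hps hfib_t
    (fun y₀ y₁ => (hcomp t htT y₀ y₁).1) (fun y₀ y₁ => (hcomp t htT y₀ y₁).2) x₀ x₁
  linarith

/-- abstraction of Lemma 6.3. Distances along a section s of p compare
with √(ka_T)·d_Y and the fibers of p uniformly shrink as t → T⁻; then
|d_t(x₀,x₁) − √(ka_T) d_Y(p(x₀),p(x₁))| → 0 uniformly as t → T⁻ (which gives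
Gromov-Hausdorff convergence of (X,d_t) to (Y, ka_T-rescaled metric)). -/
theorem stmt18 {X Y : Type*} [MetricSpace Y] [CompactSpace Y]
    (k aT α T : ℝ) (hk : 0 < k) (haT : 0 < aT) (hα : 0 < α) (hT : 0 < T)
    (d : ℝ → X → X → ℝ)
    (hsymm : ∀ t (x₀ x₁ : X), d t x₀ x₁ = d t x₁ x₀)
    (hnonneg : ∀ t (x₀ x₁ : X), 0 ≤ d t x₀ x₁)
    (hself : ∀ t (x : X), d t x x = 0)
    (htri : ∀ t (x₀ x₁ x₂ : X), d t x₀ x₂ ≤ d t x₀ x₁ + d t x₁ x₂)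
    (p : X → Y) (s : Y → X) (hps : ∀ y : Y, p (s y) = y)
    (hcomp : ∀ t : ℝ, t < T → ∀ y₀ y₁ : Y,
      Real.sqrt (k * aT) * dist y₀ y₁ ≤ d t (s y₀) (s y₁) ∧
      d t (s y₀) (s y₁) ≤ Real.sqrt (k * aT + k * (1 + α) * (T - t)) * dist y₀ y₁)
    (hfib : ∀ ε > (0:ℝ), ∃ t₀ < T, ∀ t : ℝ, t₀ ≤ t → t < T →
      ∀ x₀ x₁ : X, p x₀ = p x₁ → d t x₀ x₁ ≤ ε) :
    ∀ ε > (0:ℝ), ∃ t₀ < T, ∀ t : ℝ, t₀ ≤ t → t < T → ∀ x₀ x₁ : X,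
      |d t x₀ x₁ - Real.sqrt (k * aT) * dist (p x₀) (p x₁)| ≤ ε :=
  stmt18_general k aT α T d hsymm htri p s hps hcomp hfib
end
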